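/- Let μ be a probability measure on a set D and let A = {x ∈ D : argmax f(x) ≠ argmax h(x)} have measure ≤ ε. Suppose for every x ∉ A with i = argmax h(x) we have hᵢ(x) > hⱼ(x) + ε for j ≠ i, and ‖f'(x) - h(x)‖_∞ < ε/2 for all x. Then μ{x : argmax f(x) ≠ argmax f'(x)} ≤ ε. -/

import Mathlib

open MeasureTheory

theorem lt_of_margin_of_norm_sub_le {ι : Type*} [Fintype ι] {u v : ι → ℝ} {ε : ℝ} {i : ι}
    (hmargin : ∀ j ≠ i, v j + ε < v i) (hclose : ‖u - v‖ ≤ ε / 2) :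
    ∀ j ≠ i, u j < u i := by
  intro j hj
  have hcoord : ∀ k, |u k - v k| ≤ ε / 2 := fun k =>
    (norm_le_pi_norm (u - v) k).trans hclose
  have hi := abs_le.mp (hcoord i)
  have hj' := abs_le.mp (hcoord j)
  linarith [hmargin j hj]

theorem stmt3_general {D : Type*} [MeasurableSpace D] (μ : Measure D) [IsProbabilityMeasure μ]
    {n : ℕ} (h f' : D → Fin n → ℝ) (ε : ℝ)
    (af ah af' : D → Fin n)
    (haf' : ∀ x, ∀ j ≠ af' x, f' x (af' x) > f' x j)
    (hA : μ {x | af x ≠ ah x} ≤ ENNReal.ofReal ε)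
    (hmargin : ∀ x, af x = ah x → ∀ j ≠ ah x, h x (ah x) > h x j + ε)
    (happrox : ∀ x, ‖f' x - h x‖ < ε / 2) :
    μ {x | af x ≠ af' x} ≤ ENNReal.ofReal ε := by
  refine (measure_mono fun x hx => ?_).trans hA
  simp only [Set.mem_ofPred_eq] at hx ⊢
  intro hfh
  have hmax : ∀ j ≠ ah x, f' x j < f' x (ah x) :=
    lt_of_margin_of_norm_sub_le (hmargin x hfh) (happrox x).le
  refine hx (hfh.trans ?_)
  by_contra hne
  exact (haf' x (ah x) hne).asymm (hmax (af' x) (Ne.symm hne))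

/-- Clean-data accuracy preservation: if the strict argmaxes of `f` and `h` disagree on a set of
measure at most `ε`, `h` has an `ε`-margin wherever they agree, and `f'` is within `ε/2` of `h`
in sup norm, then the strict argmaxes of `f` and `f'` disagree with probability at most `ε`. -/
theorem stmt3 {D : Type*} [MeasurableSpace D] (μ : Measure D) [IsProbabilityMeasure μ]
    {n : ℕ} (f h f' : D → Fin n → ℝ) (ε : ℝ) (hε : 0 < ε)
    (af ah af' : D → Fin n)
    (haf : ∀ x, ∀ j ≠ af x, f x (af x) > f x j)
    (hah : ∀ x, ∀ j ≠ ah x, h x (ah x) > h x j)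
    (haf' : ∀ x, ∀ j ≠ af' x, f' x (af' x) > f' x j)
    (hA : μ {x | af x ≠ ah x} ≤ ENNReal.ofReal ε)
    (hmargin : ∀ x, af x = ah x → ∀ j ≠ ah x, h x (ah x) > h x j + ε)
    (happrox : ∀ x, ‖f' x - h x‖ < ε / 2) :
    μ {x | af x ≠ af' x} ≤ ENNReal.ofReal ε :=
  stmt3_general μ h f' ε af ah af' haf' hA hmargin happrox
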